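/- Let $K \subset \mathbb{R}^3$ be a compact set, $F : \mathbb{R}^3 \to [0,1]$ a smooth function, and $c_0 > 0$, $M > 0$ constants. Then there exists $\varepsilon > 0$ with the following property: for all $C^1$ vector fields $A, B : \mathbb{R}^3 \to \mathbb{R}^3$ such that $A \cdot \operatorname{curl} A \geq c_0$ and $B \cdot \operatorname{curl} B \geq c_0$ on $K$, $\sup_K (|A| + \|DA\|) \leq M$, and $\sup_K (|A - B| + \|DA - DB\|) < \varepsilon$, the interpolated vector field $X := F B + (1 - F) A$ satisfies $X \cdot \operatorname{curl} X > 0$ on $K$. -/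

import Mathlib

open Real

/-- Euclidean dot product on `ℝ × ℝ × ℝ`. -/
def dot3 (u v : ℝ × ℝ × ℝ) : ℝ := u.1 * v.1 + u.2.1 * v.2.1 + u.2.2 * v.2.2

/-- Euclidean norm on `ℝ × ℝ × ℝ`. -/
noncomputable def enorm3 (u : ℝ × ℝ × ℝ) : ℝ := Real.sqrt (dot3 u u)

/-- The curl of a vector field on `ℝ³`. -/
noncomputable def curl3 (A : ℝ × ℝ × ℝ → ℝ × ℝ × ℝ) : ℝ × ℝ × ℝ → ℝ × ℝ × ℝ :=
  fun p =>
    (fderiv ℝ (fun q => (A q).2.2) p (0, 1, 0) - fderiv ℝ (fun q => (A q).2.1) p (0, 0, 1),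
     fderiv ℝ (fun q => (A q).1) p (0, 0, 1) - fderiv ℝ (fun q => (A q).2.2) p (1, 0, 0),
     fderiv ℝ (fun q => (A q).2.1) p (1, 0, 0) - fderiv ℝ (fun q => (A q).1) p (0, 1, 0))

private lemma abs_sub' (x y : ℝ) : |x - y| ≤ |x| + |y| := by
  rw [sub_eq_add_neg]; exact (abs_add_le _ _).trans (by rw [abs_neg])

private lemma abs3 {x1 x2 x3 y1 y2 y3 X Y : ℝ} (hx1 : |x1| ≤ X) (hx2 : |x2| ≤ X)
    (hx3 : |x3| ≤ X) (hy1 : |y1| ≤ Y) (hy2 : |y2| ≤ Y) (hy3 : |y3| ≤ Y) :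
    |x1*y1 + x2*y2 + x3*y3| ≤ 3*(X*Y) := by
  have k1 : |x1*y1| ≤ X*Y := by
    rw [abs_mul]; exact mul_le_mul hx1 hy1 (abs_nonneg _) ((abs_nonneg _).trans hx1)
  have k2 : |x2*y2| ≤ X*Y := by
    rw [abs_mul]; exact mul_le_mul hx2 hy2 (abs_nonneg _) ((abs_nonneg _).trans hx1)
  have k3 : |x3*y3| ≤ X*Y := by
    rw [abs_mul]; exact mul_le_mul hx3 hy3 (abs_nonneg _) ((abs_nonneg _).trans hx1)
  calc |x1*y1 + x2*y2 + x3*y3| ≤ |x1*y1 + x2*y2| + |x3*y3| := abs_add_le _ _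
    _ ≤ |x1*y1| + |x2*y2| + |x3*y3| := by linarith [abs_add_le (x1*y1) (x2*y2)]
    _ ≤ 3*(X*Y) := by linarith

private lemma enorm3_comp (u : ℝ × ℝ × ℝ) :
    |u.1| ≤ enorm3 u ∧ |u.2.1| ≤ enorm3 u ∧ |u.2.2| ≤ enorm3 u := by
  unfold enorm3 dot3
  refine ⟨?_, ?_, ?_⟩ <;>
  · rw [← Real.sqrt_sq_eq_abs]
    apply Real.sqrt_le_sqrt
    nlinarith [sq_nonneg u.1, sq_nonneg u.2.1, sq_nonneg u.2.2]

private lemma fd1 {A : ℝ×ℝ×ℝ → ℝ×ℝ×ℝ} {p : ℝ×ℝ×ℝ} (hA : DifferentiableAt ℝ A p) (e : ℝ×ℝ×ℝ) :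
    fderiv ℝ (fun q => (A q).1) p e = (fderiv ℝ A p e).1 := by
  rw [hA.hasFDerivAt.fst.fderiv]; rfl

private lemma fd21 {A : ℝ×ℝ×ℝ → ℝ×ℝ×ℝ} {p : ℝ×ℝ×ℝ} (hA : DifferentiableAt ℝ A p) (e : ℝ×ℝ×ℝ) :
    fderiv ℝ (fun q => (A q).2.1) p e = (fderiv ℝ A p e).2.1 := by
  rw [hA.hasFDerivAt.snd.fst.fderiv]; rfl

private lemma fd22 {A : ℝ×ℝ×ℝ → ℝ×ℝ×ℝ} {p : ℝ×ℝ×ℝ} (hA : DifferentiableAt ℝ A p) (e : ℝ×ℝ×ℝ) :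
    fderiv ℝ (fun q => (A q).2.2) p e = (fderiv ℝ A p e).2.2 := by
  rw [hA.hasFDerivAt.snd.snd.fderiv]; rfl

private lemma fdmix {F u v : ℝ×ℝ×ℝ → ℝ} {p : ℝ×ℝ×ℝ} (hF : DifferentiableAt ℝ F p)
    (hu : DifferentiableAt ℝ u p) (hv : DifferentiableAt ℝ v p) (e : ℝ×ℝ×ℝ) :
    fderiv ℝ (fun q => F q * u q + (1 - F q) * v q) p e
      = F p * fderiv ℝ u p e + (1 - F p) * fderiv ℝ v p e + (u p - v p) * fderiv ℝ F p e := by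
  have h := (hF.hasFDerivAt.mul hu.hasFDerivAt).add
    (((hasFDerivAt_const (1:ℝ) p).sub hF.hasFDerivAt).mul hv.hasFDerivAt)
  rw [show (fun q => F q * u q + (1 - F q) * v q) = F * u + ((fun x => 1) - F) * v from rfl,
    h.fderiv]
  simp [ContinuousLinearMap.add_apply, ContinuousLinearMap.smul_apply]
  ring

private lemma opb (L : (ℝ×ℝ×ℝ) →L[ℝ] (ℝ×ℝ×ℝ)) {e : ℝ×ℝ×ℝ} (he : ‖e‖ ≤ 1) :
    |(L e).1| ≤ ‖L‖ ∧ |(L e).2.1| ≤ ‖L‖ ∧ |(L e).2.2| ≤ ‖L‖ := by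
  have h : ‖L e‖ ≤ ‖L‖ :=
    (L.le_opNorm e).trans (mul_le_of_le_one_right (norm_nonneg L) he)
  refine ⟨?_, ?_, ?_⟩
  · exact le_trans (by rw [← Real.norm_eq_abs]; exact norm_fst_le _) h
  · exact le_trans (by rw [← Real.norm_eq_abs]; exact (norm_fst_le _).trans (norm_snd_le _)) h
  · exact le_trans (by rw [← Real.norm_eq_abs]; exact (norm_snd_le _).trans (norm_snd_le _)) h

private lemma opb1 (L : (ℝ×ℝ×ℝ) →L[ℝ] ℝ) {e : ℝ×ℝ×ℝ} (he : ‖e‖ ≤ 1) :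
    |L e| ≤ ‖L‖ := by
  rw [← Real.norm_eq_abs]
  exact (L.le_opNorm e).trans (mul_le_of_le_one_right (norm_nonneg L) he)


set_option maxHeartbeats 1000000 in
private lemma innerineq (s t E1 E2 T f c₀ : ℝ) (hf0 : 0 ≤ f) (hf1 : f ≤ 1)
    (hs : c₀ ≤ s) (ht : c₀ ≤ t) (hbound : |E1| + |E2| + |T| < c₀) :
    0 < (1-f)^2*s + f^2*t + (f*(1-f))*(2*s + E1 + E2) + T := by
  have hw0 : 0 ≤ f*(1-f) := mul_nonneg hf0 (by linarith)
  have hw1 : f*(1-f) ≤ 1 := by nlinarith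
  have h1 : (1-f)^2 * c₀ ≤ (1-f)^2 * s := mul_le_mul_of_nonneg_left hs (sq_nonneg _)
  have h2 : f^2 * c₀ ≤ f^2 * t := mul_le_mul_of_nonneg_left ht (sq_nonneg _)
  have h3 : (f*(1-f)) * (2*c₀) ≤ (f*(1-f)) * (2*s) :=
    mul_le_mul_of_nonneg_left (by linarith) hw0
  have h4 : -|E1| ≤ (f*(1-f)) * E1 := by
    nlinarith [mul_nonneg hw0 (by linarith [neg_abs_le E1] : 0 ≤ E1 + |E1|),
      mul_nonneg (by linarith : (0:ℝ) ≤ 1 - f*(1-f)) (abs_nonneg E1)]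
  have h5 : -|E2| ≤ (f*(1-f)) * E2 := by
    nlinarith [mul_nonneg hw0 (by linarith [neg_abs_le E2] : 0 ≤ E2 + |E2|),
      mul_nonneg (by linarith : (0:ℝ) ≤ 1 - f*(1-f)) (abs_nonneg E2)]
  have h6 := neg_abs_le T
  nlinarith [h1, h2, h3, h4, h5, h6, hbound]

set_option maxHeartbeats 1000000 in
private lemma keyineq (f a1 a2 a3 b1 b2 b3 q1 q2 q3 r1 r2 r3 g1 g2 g3 c₀ M CF ε : ℝ)
    (hf0 : 0 ≤ f) (hf1 : f ≤ 1)
    (hSa : c₀ ≤ a1*q1 + a2*q2 + a3*q3)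
    (hSb : c₀ ≤ b1*r1 + b2*r2 + b3*r3)
    (ha1 : |a1| ≤ M) (ha2 : |a2| ≤ M) (ha3 : |a3| ≤ M)
    (hq1 : |q1| ≤ 2*M) (hq2 : |q2| ≤ 2*M) (hq3 : |q3| ≤ 2*M)
    (hd1 : |b1 - a1| ≤ ε) (hd2 : |b2 - a2| ≤ ε) (hd3 : |b3 - a3| ≤ ε)
    (hc1 : |r1 - q1| ≤ 2*ε) (hc2 : |r2 - q2| ≤ 2*ε) (hc3 : |r3 - q3| ≤ 2*ε)
    (hg1 : |g1| ≤ CF) (hg2 : |g2| ≤ CF) (hg3 : |g3| ≤ CF)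
    (hCF : 0 ≤ CF) (hε0 : 0 < ε) (hε1 : ε ≤ 1)
    (hsmall : ε * (12*M + 6*(M+1)*CF) < c₀) :
    0 < (f*b1 + (1-f)*a1) * (f*r1 + (1-f)*q1 + ((b3-a3)*g2 - (b2-a2)*g3))
      + (f*b2 + (1-f)*a2) * (f*r2 + (1-f)*q2 + ((b1-a1)*g3 - (b3-a3)*g1))
      + (f*b3 + (1-f)*a3) * (f*r3 + (1-f)*q3 + ((b2-a2)*g1 - (b1-a1)*g2)) := by
  have hE1 : |a1*(r1-q1) + a2*(r2-q2) + a3*(r3-q3)| ≤ 3*(M*(2*ε)) :=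
    abs3 ha1 ha2 ha3 hc1 hc2 hc3
  have hE2 : |(b1-a1)*q1 + (b2-a2)*q2 + (b3-a3)*q3| ≤ 3*(ε*(2*M)) :=
    abs3 hd1 hd2 hd3 hq1 hq2 hq3
  have hb1 : |b1| ≤ M + 1 := by
    calc |b1| = |a1 + (b1 - a1)| := by ring_nf
      _ ≤ |a1| + |b1 - a1| := abs_add_le _ _
      _ ≤ M + 1 := by linarith
  have hb2 : |b2| ≤ M + 1 := by
    calc |b2| = |a2 + (b2 - a2)| := by ring_nf
      _ ≤ |a2| + |b2 - a2| := abs_add_le _ _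
      _ ≤ M + 1 := by linarith
  have hb3 : |b3| ≤ M + 1 := by
    calc |b3| = |a3 + (b3 - a3)| := by ring_nf
      _ ≤ |a3| + |b3 - a3| := abs_add_le _ _
      _ ≤ M + 1 := by linarith
  have hX : ∀ b a : ℝ, |b| ≤ M + 1 → |a| ≤ M → |f*b + (1-f)*a| ≤ M + 1 := by
    intro b a hb ha
    calc |f*b + (1-f)*a| ≤ |f*b| + |(1-f)*a| := abs_add_le _ _
      _ = f*|b| + (1-f)*|a| := by
          rw [abs_mul, abs_mul, abs_of_nonneg hf0, abs_of_nonneg (by linarith : (0:ℝ) ≤ 1-f)]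
      _ ≤ f*(M+1) + (1-f)*(M+1) := by
          have h1 := mul_le_mul_of_nonneg_left hb hf0
          have h2 := mul_le_mul_of_nonneg_left (ha.trans (by linarith : M ≤ M+1))
            (by linarith : (0:ℝ) ≤ 1-f)
          linarith
      _ = M + 1 := by ring
  have hX1 := hX b1 a1 hb1 ha1
  have hX2 := hX b2 a2 hb2 ha2
  have hX3 := hX b3 a3 hb3 ha3
  have hcr : ∀ x y u v : ℝ, |x| ≤ ε → |y| ≤ ε → |u| ≤ CF → |v| ≤ CF →
      |x*u - y*v| ≤ 2*(ε*CF) := by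
    intro x y u v hx hy hu hv
    have k1 : |x*u| ≤ ε*CF := by
      rw [abs_mul]; exact mul_le_mul hx hu (abs_nonneg _) hε0.le
    have k2 : |y*v| ≤ ε*CF := by
      rw [abs_mul]; exact mul_le_mul hy hv (abs_nonneg _) hε0.le
    calc |x*u - y*v| ≤ |x*u| + |y*v| := abs_sub' _ _
      _ ≤ 2*(ε*CF) := by linarith
  have hcr1 := hcr (b3-a3) (b2-a2) g2 g3 hd3 hd2 hg2 hg3
  have hcr2 := hcr (b1-a1) (b3-a3) g3 g1 hd1 hd3 hg3 hg1
  have hcr3 := hcr (b2-a2) (b1-a1) g1 g2 hd2 hd1 hg1 hg2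
  have hT : |(f*b1 + (1-f)*a1) * ((b3-a3)*g2 - (b2-a2)*g3)
      + (f*b2 + (1-f)*a2) * ((b1-a1)*g3 - (b3-a3)*g1)
      + (f*b3 + (1-f)*a3) * ((b2-a2)*g1 - (b1-a1)*g2)| ≤ 3*((M+1)*(2*(ε*CF))) :=
    abs3 hX1 hX2 hX3 hcr1 hcr2 hcr3
  have hbound : |a1*(r1-q1) + a2*(r2-q2) + a3*(r3-q3)|
      + |(b1-a1)*q1 + (b2-a2)*q2 + (b3-a3)*q3|
      + |(f*b1 + (1-f)*a1) * ((b3-a3)*g2 - (b2-a2)*g3)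
      + (f*b2 + (1-f)*a2) * ((b1-a1)*g3 - (b3-a3)*g1)
      + (f*b3 + (1-f)*a3) * ((b2-a2)*g1 - (b1-a1)*g2)| < c₀ := by
    nlinarith [hE1, hE2, hT, hsmall]
  have hin := innerineq (a1*q1 + a2*q2 + a3*q3) (b1*r1 + b2*r2 + b3*r3)
    (a1*(r1-q1) + a2*(r2-q2) + a3*(r3-q3))
    ((b1-a1)*q1 + (b2-a2)*q2 + (b3-a3)*q3)
    ((f*b1 + (1-f)*a1) * ((b3-a3)*g2 - (b2-a2)*g3)
      + (f*b2 + (1-f)*a2) * ((b1-a1)*g3 - (b3-a3)*g1)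
      + (f*b3 + (1-f)*a3) * ((b2-a2)*g1 - (b1-a1)*g2))
    f c₀ hf0 hf1 hSa hSb hbound
  nlinarith [hin]

set_option maxHeartbeats 4000000 in
theorem stmt17 (K : Set (ℝ × ℝ × ℝ)) (hK : IsCompact K)
    (F : ℝ × ℝ × ℝ → ℝ) (hF : ContDiff ℝ (⊤ : ℕ∞) F) (hF01 : ∀ p, F p ∈ Set.Icc (0:ℝ) 1)
    (c₀ M : ℝ) (hc₀ : 0 < c₀) (hM : 0 < M) :
    ∃ ε > 0, ∀ A B : ℝ × ℝ × ℝ → ℝ × ℝ × ℝ,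
      ContDiff ℝ 1 A → ContDiff ℝ 1 B →
      (∀ p ∈ K, c₀ ≤ dot3 (A p) (curl3 A p)) →
      (∀ p ∈ K, c₀ ≤ dot3 (B p) (curl3 B p)) →
      (∀ p ∈ K, enorm3 (A p) + ‖fderiv ℝ A p‖ ≤ M) →
      (∀ p ∈ K, enorm3 (A p - B p) + ‖fderiv ℝ A p - fderiv ℝ B p‖ < ε) →
      ∀ p ∈ K,
        0 < dot3 ((fun q => F q • B q + (1 - F q) • A q) p)
              (curl3 (fun q => F q • B q + (1 - F q) • A q) p) := by
  obtain ⟨C, hC⟩ := hK.exists_bound_of_continuousOn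
    ((hF.continuous_fderiv (by simp)).continuousOn)
  set CF := max C 0 with hCFdef
  have hCF0 : (0:ℝ) ≤ CF := le_max_right _ _
  have hCFb : ∀ p ∈ K, ‖fderiv ℝ F p‖ ≤ CF := fun p hp => (hC p hp).trans (le_max_left _ _)
  set S := 12*M + 6*(M+1)*CF with hSdef
  have hS0 : (0:ℝ) ≤ S := by nlinarith [hCF0, hM.le]
  set ε := min 1 (c₀/(S+1)) with hεdef
  have hε0 : (0:ℝ) < ε := lt_min one_pos (div_pos hc₀ (by linarith))
  have hε1 : ε ≤ 1 := min_le_left _ _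
  have hsmall : ε * S < c₀ := by
    calc ε * S ≤ (c₀/(S+1)) * S := mul_le_mul_of_nonneg_right (min_le_right _ _) hS0
      _ < c₀ := by
          rw [div_mul_eq_mul_div, div_lt_iff₀ (by linarith : (0:ℝ) < S+1)]
          nlinarith [hc₀]
  refine ⟨ε, hε0, ?_⟩
  intro A B hA hB hcA hcB hAM hclose p hp
  have hAp : DifferentiableAt ℝ A p := (hA.differentiable one_ne_zero) p
  have hBp : DifferentiableAt ℝ B p := (hB.differentiable one_ne_zero) p
  have hFp : DifferentiableAt ℝ F p := (hF.differentiable (by simp)) p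
  have he1 : ‖(((1:ℝ),(0:ℝ),(0:ℝ)) : ℝ×ℝ×ℝ)‖ ≤ 1 := by simp [Prod.norm_def]
  have he2 : ‖(((0:ℝ),(1:ℝ),(0:ℝ)) : ℝ×ℝ×ℝ)‖ ≤ 1 := by simp [Prod.norm_def]
  have he3 : ‖(((0:ℝ),(0:ℝ),(1:ℝ)) : ℝ×ℝ×ℝ)‖ ≤ 1 := by simp [Prod.norm_def]
  -- basic bounds
  have hMp := hAM p hp
  have hea : enorm3 (A p) ≤ M := by
    have := norm_nonneg (fderiv ℝ A p); linarith
  have hna : ‖fderiv ℝ A p‖ ≤ M := by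
    have : (0:ℝ) ≤ enorm3 (A p) := Real.sqrt_nonneg _
    linarith
  have hclosep := hclose p hp
  have hed : enorm3 (A p - B p) ≤ ε := by
    have := norm_nonneg (fderiv ℝ A p - fderiv ℝ B p); linarith
  have hnd : ‖fderiv ℝ A p - fderiv ℝ B p‖ ≤ ε := by
    have : (0:ℝ) ≤ enorm3 (A p - B p) := Real.sqrt_nonneg _
    linarith
  -- component bounds
  obtain ⟨ha1, ha2, ha3⟩ := enorm3_comp (A p)
  obtain ⟨hd1, hd2, hd3⟩ := enorm3_comp (A p - B p)
  have hd1' : |(B p).1 - (A p).1| ≤ ε := by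
    rw [abs_sub_comm]; exact le_trans (by simpa using hd1) hed
  have hd2' : |(B p).2.1 - (A p).2.1| ≤ ε := by
    rw [abs_sub_comm]; exact le_trans (by simpa using hd2) hed
  have hd3' : |(B p).2.2 - (A p).2.2| ≤ ε := by
    rw [abs_sub_comm]; exact le_trans (by simpa using hd3) hed
  obtain ⟨hA11, hA21, hA31⟩ := opb (fderiv ℝ A p) he1
  obtain ⟨hA12, hA22, hA32⟩ := opb (fderiv ℝ A p) he2
  obtain ⟨hA13, hA23, hA33⟩ := opb (fderiv ℝ A p) he3
  obtain ⟨hD11, hD21, hD31⟩ := opb (fderiv ℝ A p - fderiv ℝ B p) he1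
  obtain ⟨hD12, hD22, hD32⟩ := opb (fderiv ℝ A p - fderiv ℝ B p) he2
  obtain ⟨hD13, hD23, hD33⟩ := opb (fderiv ℝ A p - fderiv ℝ B p) he3
  have hsub : ∀ e : ℝ×ℝ×ℝ, (fderiv ℝ A p - fderiv ℝ B p) e
      = fderiv ℝ A p e - fderiv ℝ B p e := fun e => rfl
  have hg1 : |fderiv ℝ F p ((1:ℝ),(0:ℝ),(0:ℝ))| ≤ CF := (opb1 _ he1).trans (hCFb p hp)
  have hg2 : |fderiv ℝ F p ((0:ℝ),(1:ℝ),(0:ℝ))| ≤ CF := (opb1 _ he2).trans (hCFb p hp)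
  have hg3 : |fderiv ℝ F p ((0:ℝ),(0:ℝ),(1:ℝ))| ≤ CF := (opb1 _ he3).trans (hCFb p hp)
  -- contact hypotheses in scalar form
  have hSa' := hcA p hp
  have hSb' := hcB p hp
  simp only [dot3, curl3, fd1 hAp, fd21 hAp, fd22 hAp] at hSa'
  simp only [dot3, curl3, fd1 hBp, fd21 hBp, fd22 hBp] at hSb'
  -- curl bounds for A
  have hq1 : |(fderiv ℝ A p ((0:ℝ),(1:ℝ),(0:ℝ))).2.2
      - (fderiv ℝ A p ((0:ℝ),(0:ℝ),(1:ℝ))).2.1| ≤ 2*M := by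
    calc _ ≤ |(fderiv ℝ A p ((0:ℝ),(1:ℝ),(0:ℝ))).2.2|
        + |(fderiv ℝ A p ((0:ℝ),(0:ℝ),(1:ℝ))).2.1| := abs_sub' _ _
      _ ≤ 2*M := by linarith [hA32.trans hna, hA23.trans hna]
  have hq2 : |(fderiv ℝ A p ((0:ℝ),(0:ℝ),(1:ℝ))).1
      - (fderiv ℝ A p ((1:ℝ),(0:ℝ),(0:ℝ))).2.2| ≤ 2*M := by
    calc _ ≤ |(fderiv ℝ A p ((0:ℝ),(0:ℝ),(1:ℝ))).1|
        + |(fderiv ℝ A p ((1:ℝ),(0:ℝ),(0:ℝ))).2.2| := abs_sub' _ _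
      _ ≤ 2*M := by linarith [hA13.trans hna, hA31.trans hna]
  have hq3 : |(fderiv ℝ A p ((1:ℝ),(0:ℝ),(0:ℝ))).2.1
      - (fderiv ℝ A p ((0:ℝ),(1:ℝ),(0:ℝ))).1| ≤ 2*M := by
    calc _ ≤ |(fderiv ℝ A p ((1:ℝ),(0:ℝ),(0:ℝ))).2.1|
        + |(fderiv ℝ A p ((0:ℝ),(1:ℝ),(0:ℝ))).1| := abs_sub' _ _
      _ ≤ 2*M := by linarith [hA21.trans hna, hA12.trans hna]
  -- curl difference bounds
  have hc1 : |((fderiv ℝ B p ((0:ℝ),(1:ℝ),(0:ℝ))).2.2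
        - (fderiv ℝ B p ((0:ℝ),(0:ℝ),(1:ℝ))).2.1)
      - ((fderiv ℝ A p ((0:ℝ),(1:ℝ),(0:ℝ))).2.2
        - (fderiv ℝ A p ((0:ℝ),(0:ℝ),(1:ℝ))).2.1)| ≤ 2*ε := by
    have e1 : ((fderiv ℝ B p ((0:ℝ),(1:ℝ),(0:ℝ))).2.2
        - (fderiv ℝ B p ((0:ℝ),(0:ℝ),(1:ℝ))).2.1)
      - ((fderiv ℝ A p ((0:ℝ),(1:ℝ),(0:ℝ))).2.2
        - (fderiv ℝ A p ((0:ℝ),(0:ℝ),(1:ℝ))).2.1)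
      = ((fderiv ℝ A p - fderiv ℝ B p) ((0:ℝ),(0:ℝ),(1:ℝ))).2.1
        - ((fderiv ℝ A p - fderiv ℝ B p) ((0:ℝ),(1:ℝ),(0:ℝ))).2.2 := by
      simp only [hsub, Prod.fst_sub, Prod.snd_sub]; ring
    rw [e1]
    calc _ ≤ |((fderiv ℝ A p - fderiv ℝ B p) ((0:ℝ),(0:ℝ),(1:ℝ))).2.1|
        + |((fderiv ℝ A p - fderiv ℝ B p) ((0:ℝ),(1:ℝ),(0:ℝ))).2.2| := abs_sub' _ _
      _ ≤ 2*ε := by linarith [hD23.trans hnd, hD32.trans hnd]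
  have hc2 : |((fderiv ℝ B p ((0:ℝ),(0:ℝ),(1:ℝ))).1
        - (fderiv ℝ B p ((1:ℝ),(0:ℝ),(0:ℝ))).2.2)
      - ((fderiv ℝ A p ((0:ℝ),(0:ℝ),(1:ℝ))).1
        - (fderiv ℝ A p ((1:ℝ),(0:ℝ),(0:ℝ))).2.2)| ≤ 2*ε := by
    have e1 : ((fderiv ℝ B p ((0:ℝ),(0:ℝ),(1:ℝ))).1
        - (fderiv ℝ B p ((1:ℝ),(0:ℝ),(0:ℝ))).2.2)
      - ((fderiv ℝ A p ((0:ℝ),(0:ℝ),(1:ℝ))).1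
        - (fderiv ℝ A p ((1:ℝ),(0:ℝ),(0:ℝ))).2.2)
      = ((fderiv ℝ A p - fderiv ℝ B p) ((1:ℝ),(0:ℝ),(0:ℝ))).2.2
        - ((fderiv ℝ A p - fderiv ℝ B p) ((0:ℝ),(0:ℝ),(1:ℝ))).1 := by
      simp only [hsub, Prod.fst_sub, Prod.snd_sub]; ring
    rw [e1]
    calc _ ≤ |((fderiv ℝ A p - fderiv ℝ B p) ((1:ℝ),(0:ℝ),(0:ℝ))).2.2|
        + |((fderiv ℝ A p - fderiv ℝ B p) ((0:ℝ),(0:ℝ),(1:ℝ))).1| := abs_sub' _ _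
      _ ≤ 2*ε := by linarith [hD31.trans hnd, hD13.trans hnd]
  have hc3 : |((fderiv ℝ B p ((1:ℝ),(0:ℝ),(0:ℝ))).2.1
        - (fderiv ℝ B p ((0:ℝ),(1:ℝ),(0:ℝ))).1)
      - ((fderiv ℝ A p ((1:ℝ),(0:ℝ),(0:ℝ))).2.1
        - (fderiv ℝ A p ((0:ℝ),(1:ℝ),(0:ℝ))).1)| ≤ 2*ε := by
    have e1 : ((fderiv ℝ B p ((1:ℝ),(0:ℝ),(0:ℝ))).2.1
        - (fderiv ℝ B p ((0:ℝ),(1:ℝ),(0:ℝ))).1)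
      - ((fderiv ℝ A p ((1:ℝ),(0:ℝ),(0:ℝ))).2.1
        - (fderiv ℝ A p ((0:ℝ),(1:ℝ),(0:ℝ))).1)
      = ((fderiv ℝ A p - fderiv ℝ B p) ((0:ℝ),(1:ℝ),(0:ℝ))).1
        - ((fderiv ℝ A p - fderiv ℝ B p) ((1:ℝ),(0:ℝ),(0:ℝ))).2.1 := by
      simp only [hsub, Prod.fst_sub, Prod.snd_sub]; ring
    rw [e1]
    calc _ ≤ |((fderiv ℝ A p - fderiv ℝ B p) ((0:ℝ),(1:ℝ),(0:ℝ))).1|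
        + |((fderiv ℝ A p - fderiv ℝ B p) ((1:ℝ),(0:ℝ),(0:ℝ))).2.1| := abs_sub' _ _
      _ ≤ 2*ε := by linarith [hD12.trans hnd, hD21.trans hnd]
  -- derivative of the interpolated field
  have hmix1 : ∀ e : ℝ×ℝ×ℝ, fderiv ℝ (fun q => F q * (B q).1 + (1 - F q) * (A q).1) p e
      = F p * (fderiv ℝ B p e).1 + (1 - F p) * (fderiv ℝ A p e).1
        + ((B p).1 - (A p).1) * fderiv ℝ F p e := by
    intro e
    rw [fdmix hFp hBp.fst hAp.fst, fd1 hBp, fd1 hAp]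
  have hmix2 : ∀ e : ℝ×ℝ×ℝ, fderiv ℝ (fun q => F q * (B q).2.1 + (1 - F q) * (A q).2.1) p e
      = F p * (fderiv ℝ B p e).2.1 + (1 - F p) * (fderiv ℝ A p e).2.1
        + ((B p).2.1 - (A p).2.1) * fderiv ℝ F p e := by
    intro e
    rw [fdmix hFp hBp.snd.fst hAp.snd.fst, fd21 hBp, fd21 hAp]
  have hmix3 : ∀ e : ℝ×ℝ×ℝ, fderiv ℝ (fun q => F q * (B q).2.2 + (1 - F q) * (A q).2.2) p e
      = F p * (fderiv ℝ B p e).2.2 + (1 - F p) * (fderiv ℝ A p e).2.2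
        + ((B p).2.2 - (A p).2.2) * fderiv ℝ F p e := by
    intro e
    rw [fdmix hFp hBp.snd.snd hAp.snd.snd, fd22 hBp, fd22 hAp]
  simp only [dot3, curl3, Prod.fst_add, Prod.snd_add,
    Prod.smul_fst, Prod.smul_snd, smul_eq_mul]
  simp only [hmix1, hmix2, hmix3]
  have key := keyineq (F p) (A p).1 (A p).2.1 (A p).2.2 (B p).1 (B p).2.1 (B p).2.2
    ((fderiv ℝ A p ((0:ℝ),(1:ℝ),(0:ℝ))).2.2 - (fderiv ℝ A p ((0:ℝ),(0:ℝ),(1:ℝ))).2.1)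
    ((fderiv ℝ A p ((0:ℝ),(0:ℝ),(1:ℝ))).1 - (fderiv ℝ A p ((1:ℝ),(0:ℝ),(0:ℝ))).2.2)
    ((fderiv ℝ A p ((1:ℝ),(0:ℝ),(0:ℝ))).2.1 - (fderiv ℝ A p ((0:ℝ),(1:ℝ),(0:ℝ))).1)
    ((fderiv ℝ B p ((0:ℝ),(1:ℝ),(0:ℝ))).2.2 - (fderiv ℝ B p ((0:ℝ),(0:ℝ),(1:ℝ))).2.1)
    ((fderiv ℝ B p ((0:ℝ),(0:ℝ),(1:ℝ))).1 - (fderiv ℝ B p ((1:ℝ),(0:ℝ),(0:ℝ))).2.2)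
    ((fderiv ℝ B p ((1:ℝ),(0:ℝ),(0:ℝ))).2.1 - (fderiv ℝ B p ((0:ℝ),(1:ℝ),(0:ℝ))).1)
    (fderiv ℝ F p ((1:ℝ),(0:ℝ),(0:ℝ))) (fderiv ℝ F p ((0:ℝ),(1:ℝ),(0:ℝ)))
    (fderiv ℝ F p ((0:ℝ),(0:ℝ),(1:ℝ)))
    c₀ M CF ε (hF01 p).1 (hF01 p).2 (by linarith [hSa']) (by linarith [hSb'])
    (ha1.trans hea) (ha2.trans hea) (ha3.trans hea) hq1 hq2 hq3
    hd1' hd2' hd3' hc1 hc2 hc3 hg1 hg2 hg3 hCF0 hε0 hε1 hsmall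
  nlinarith [key]
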